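/- arXiv:1603.03096 — 4 statements merged into one kernel-verified Lean document; each statement's English description precedes it below -/
import Mathlib

section
/- Let n ≥ 1, let ι be a finite index type of cardinality n², let {X_a}_{a∈ι} be a basis of the complex vector space of n×n complex matrices, and let {X′_a}_{a∈ι} be a family of n×n complex matrices satisfying the duality relations Tr((X′_a)ᴴ X_b) = δ_{ab} for all a, b ∈ ι. Then Σ_{a∈ι} X_a ⊗ (X′_a)ᴴ = Σ_{i,j} E_{ij} ⊗ E_{ji}, where the sum on the right runs over all i, j, E_{ij} denotes the matrix unit (the n×n matrix with a 1 in entry (i,j) and 0 elsewhere), and ⊗ denotes the Kronecker product of matrices. In particular, the witness operator W := Σ_a X_a ⊗ (X′_a)ᴴ is independent of the chosen dual basis pair and equals the swap operator on ℂⁿ ⊗ ℂⁿ. -/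
/-!
The dual family realises the coordinate functionals of the basis `X` through the trace pairing,
so every matrix expands as `M = ∑ₐ Tr((X′ₐ)ᴴ M) Xₐ`. Applied to the matrix unit `M = E_{lk}`,
whose pairing with `X′ₐ` is the entry `conj (X′ₐ)_{lk}`, this expansion is exactly the
`((i,k),(j,l))` entry of `∑ₐ Xₐ ⊗ (X′ₐ)ᴴ = ∑_{i,j} E_{ij} ⊗ E_{ji}`.
-/

open Matrix Kronecker

theorem Module.Basis.sum_smul_eq_self_of_biorthogonal {ι R M : Type*} [Fintype ι] [DecidableEq ι]
    [CommSemiring R] [AddCommMonoid M] [Module R M] (b : Module.Basis ι R M)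
    (f : ι → M →ₗ[R] R) (hf : ∀ a c, f a (b c) = if a = c then 1 else 0) (x : M) :
    ∑ a, f a x • b a = x := by
  have hcoord : ∀ a, f a = b.coord a := fun a =>
    b.ext fun c => by simp [hf, Finsupp.single_apply, eq_comm]
  simp [hcoord, b.sum_repr x]

namespace Matrix

variable {m n R : Type*} [Fintype m] [Fintype n] [CommSemiring R]

theorem trace_conjTranspose_mul_single [DecidableEq m] [DecidableEq n] [StarRing R]
    (A : Matrix m n R) (i : m) (j : n) :
    (Aᴴ * single i j (1 : R)).trace = star (A i j) := by
  simp [trace_mul_single]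

theorem sum_trace_conjTranspose_mul_smul_eq_self {ι : Type*} [Fintype ι] [DecidableEq ι]
    [StarRing R] (b : Module.Basis ι R (Matrix m n R))
    (X' : ι → Matrix m n R) (hdual : ∀ a c, ((X' a)ᴴ * b c).trace = if a = c then 1 else 0)
    (M : Matrix m n R) : ∑ a, ((X' a)ᴴ * M).trace • b a = M :=
  b.sum_smul_eq_self_of_biorthogonal
    (fun a => (traceLinearMap n R R).comp (mulLeftLinearMap n R (X' a)ᴴ)) hdual M

theorem sum_single_kronecker_single_apply [DecidableEq m] [DecidableEq n]
    (i : m) (k : n) (j : n) (l : m) :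
    (∑ p : m, ∑ q : n, single p q (1 : R) ⊗ₖ single q p (1 : R)) (i, k) (j, l) =
      single l k (1 : R) i j := by
  simp [Matrix.sum_apply, single, ite_and, eq_comm]

end Matrix

theorem witness_basis_independent_general
    (n : ℕ)
    (ι : Type) [Fintype ι] [DecidableEq ι]
    (X X' : ι → Matrix (Fin n) (Fin n) ℂ)
    (hbasis : ∃ b : Module.Basis ι ℂ (Matrix (Fin n) (Fin n) ℂ), ∀ a, b a = X a)
    (hdual : ∀ a b : ι, ((X' a)ᴴ * X b).trace = if a = b then 1 else 0) :
    ∑ a : ι, (X a) ⊗ₖ (X' a)ᴴ =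
      ∑ i : Fin n, ∑ j : Fin n,
        (Matrix.single i j (1 : ℂ)) ⊗ₖ (Matrix.single j i (1 : ℂ)) := by
  obtain ⟨b, hb⟩ := hbasis
  obtain rfl : ⇑b = X := funext hb
  ext ⟨i, k⟩ ⟨j, l⟩
  have hexpand :=
    congrFun₂ (sum_trace_conjTranspose_mul_smul_eq_self b X' hdual (single l k 1)) i j
  simp only [Matrix.sum_apply, Matrix.smul_apply, trace_conjTranspose_mul_single,
    smul_eq_mul] at hexpand
  rw [sum_single_kronecker_single_apply, ← hexpand, Matrix.sum_apply]
  simp only [kroneckerMap_apply, conjTranspose_apply, mul_comm]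

/-- If `{X_a}` is a basis of the `n×n` complex matrices (indexed by a finite
type `ι` of cardinality `n²`) and `{X′_a}` is a dual family, i.e.
`Tr((X′_a)ᴴ X_b) = δ_{ab}`, then `Σ_a X_a ⊗ (X′_a)ᴴ = Σ_{i,j} E_{ij} ⊗ E_{ji}`,
the swap operator on `ℂⁿ ⊗ ℂⁿ`. -/
theorem witness_basis_independent
    (n : ℕ) (hn : 1 ≤ n)
    (ι : Type) [Fintype ι] [DecidableEq ι] (hcard : Fintype.card ι = n ^ 2)
    (X X' : ι → Matrix (Fin n) (Fin n) ℂ)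
    (hbasis : ∃ b : Module.Basis ι ℂ (Matrix (Fin n) (Fin n) ℂ), ∀ a, b a = X a)
    (hdual : ∀ a b : ι, ((X' a)ᴴ * X b).trace = if a = b then 1 else 0) :
    ∑ a : ι, (X a) ⊗ₖ (X' a)ᴴ =
      ∑ i : Fin n, ∑ j : Fin n,
        (Matrix.single i j (1 : ℂ)) ⊗ₖ (Matrix.single j i (1 : ℂ)) :=
  witness_basis_independent_general n ι X X' hbasis hdual
end

section
/- Let n ≥ 1 and let W := Σ_{i,j} E_{ij} ⊗ E_{ji} be the swap operator on ℂⁿ ⊗ ℂⁿ. Let σ be a separable state on ℂⁿ ⊗ ℂⁿ, i.e., σ = Σ_{k∈K} p_k · σ_{1,k} ⊗ σ_{2,k} for a finite index set K, nonnegative reals p_k with Σ_k p_k = 1, and density matrices σ_{1,k}, σ_{2,k} on ℂⁿ. Then Tr(σ·W) is a real number satisfying 0 ≤ Tr(σ·W) ≤ 1. -/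
/-!
Writing `W` for the swap operator, `Tr((A ⊗ B) W) = Tr(A B)`, so `Tr(σ W)` is a convex combination
of the numbers `Tr(σ₁ σ₂)` for density matrices `σ₁, σ₂`. Each of these lies in `[0, 1]`:
`Tr(σ₁ σ₂) = Tr(X σ₂ Xᴴ) ≥ 0` for `σ₁ = Xᴴ X`, and since `σ₂ ≤ Tr(σ₂) • 1` in the Loewner order,
also `Tr(σ₁ σ₂) ≤ Tr(σ₁) Tr(σ₂) = 1`.
-/

open Matrix Kronecker ComplexOrder

namespace Matrix

section Swap

variable {m R : Type*} [Fintype m] [DecidableEq m] [CommSemiring R]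

variable (m R) in
def swapMatrix : Matrix (m × m) (m × m) R :=
  ∑ i : m, ∑ j : m, single i j (1 : R) ⊗ₖ single j i (1 : R)

theorem trace_kronecker_mul_swapMatrix (A B : Matrix m m R) :
    ((A ⊗ₖ B) * swapMatrix m R).trace = (A * B).trace := by
  simp only [swapMatrix, Finset.mul_sum, trace_sum, ← mul_kronecker_mul, trace_kronecker,
    trace_mul_single, MulOpposite.op_one, one_smul]
  simp only [trace, diag, mul_apply]
  rw [Finset.sum_comm]

end Swap

namespace PosSemidef

variable {𝕜 n : Type*} [RCLike 𝕜] [Fintype n] {A B : Matrix n n 𝕜}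

open MatrixOrder in
theorem posSemidef_trace_smul_one_sub [DecidableEq n] (hA : A.PosSemidef) :
    (A.trace • 1 - A).PosSemidef := by
  have hle : A ≤ algebraMap ℝ _ (∑ i, hA.1.eigenvalues i) := by
    refine le_algebraMap_of_spectrum_le (ha := hA.1.isSelfAdjoint) ?_
    rw [hA.1.spectrum_real_eq_range_eigenvalues]
    rintro _ ⟨i, rfl⟩
    exact Finset.single_le_sum (fun j _ => hA.eigenvalues_nonneg j) (Finset.mem_univ i)
  rwa [Algebra.algebraMap_eq_smul_one, RCLike.real_smul_eq_coe_smul (K := 𝕜), RCLike.ofReal_sum,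
    ← hA.1.trace_eq_sum_eigenvalues] at hle

theorem trace_mul_nonneg (hA : A.PosSemidef) (hB : B.PosSemidef) : 0 ≤ (A * B).trace := by
  classical
  open MatrixOrder in
  obtain ⟨X, rfl⟩ := CStarAlgebra.nonneg_iff_eq_star_mul_self.mp hA.nonneg
  rw [Matrix.mul_assoc, trace_mul_comm, star_eq_conjTranspose]
  exact (hB.mul_mul_conjTranspose_same X).trace_nonneg

theorem trace_mul_le (hA : A.PosSemidef) (hB : B.PosSemidef) :
    (A * B).trace ≤ A.trace * B.trace := by
  classical
  have := hA.trace_mul_nonneg hB.posSemidef_trace_smul_one_sub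
  rwa [Matrix.mul_sub, trace_sub, Matrix.mul_smul, Matrix.mul_one, trace_smul, smul_eq_mul,
    mul_comm, sub_nonneg] at this

theorem trace_mul_mem_Icc_of_trace_eq_one (hA : A.PosSemidef) (hB : B.PosSemidef)
    (hA₁ : A.trace = 1) (hB₁ : B.trace = 1) : (A * B).trace ∈ Set.Icc 0 1 :=
  ⟨hA.trace_mul_nonneg hB, by simpa [hA₁, hB₁] using hA.trace_mul_le hB⟩

end PosSemidef

end Matrix

theorem swap_witness_separable_bounds_general
    (n : ℕ)
    (W : Matrix (Fin n × Fin n) (Fin n × Fin n) ℂ)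
    (hW : W = ∑ i : Fin n, ∑ j : Fin n,
        (Matrix.single i j (1 : ℂ)) ⊗ₖ (Matrix.single j i (1 : ℂ)))
    (K : Type) [Fintype K]
    (p : K → ℝ) (hp : ∀ k, 0 ≤ p k) (hpsum : ∑ k, p k = 1)
    (σ₁ σ₂ : K → Matrix (Fin n) (Fin n) ℂ)
    (h₁pos : ∀ k, (σ₁ k).PosSemidef) (h₁tr : ∀ k, (σ₁ k).trace = 1)
    (h₂pos : ∀ k, (σ₂ k).PosSemidef) (h₂tr : ∀ k, (σ₂ k).trace = 1)
    (σ : Matrix (Fin n × Fin n) (Fin n × Fin n) ℂ)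
    (hσ : σ = ∑ k : K, (p k : ℂ) • ((σ₁ k) ⊗ₖ (σ₂ k))) :
    (σ * W).trace.im = 0 ∧ 0 ≤ (σ * W).trace.re ∧ (σ * W).trace.re ≤ 1 := by
  have hconvex : (σ * W).trace = ∑ k, p k • (σ₁ k * σ₂ k).trace := by
    change W = swapMatrix (Fin n) ℂ at hW
    simp only [hσ, hW, Finset.sum_mul, trace_sum, smul_mul, trace_smul,
      trace_kronecker_mul_swapMatrix, Complex.coe_smul]
  have hmem : (σ * W).trace ∈ Set.Icc 0 1 := hconvex ▸
    (convex_Icc 0 1).sum_mem (fun k _ => hp k) hpsum fun k _ =>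
      (h₁pos k).trace_mul_mem_Icc_of_trace_eq_one (h₂pos k) (h₁tr k) (h₂tr k)
  obtain ⟨⟨hre_nonneg, him⟩, hre_le, -⟩ := And.imp Complex.le_def.mp Complex.le_def.mp hmem
  exact ⟨him.symm, hre_nonneg, hre_le⟩

/-- With `W := Σ_{i,j} E_{ij} ⊗ E_{ji}` the swap operator on `ℂⁿ ⊗ ℂⁿ`,
for every separable state `σ = Σ_k p_k σ_{1,k} ⊗ σ_{2,k}` (a finite convex combination
of Kronecker products of density matrices), `Tr(σ·W)` is a real number in `[0,1]`. -/
theorem swap_witness_separable_bounds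
    (n : ℕ) (hn : 1 ≤ n)
    (W : Matrix (Fin n × Fin n) (Fin n × Fin n) ℂ)
    (hW : W = ∑ i : Fin n, ∑ j : Fin n,
        (Matrix.single i j (1 : ℂ)) ⊗ₖ (Matrix.single j i (1 : ℂ)))
    (K : Type) [Fintype K]
    (p : K → ℝ) (hp : ∀ k, 0 ≤ p k) (hpsum : ∑ k, p k = 1)
    (σ₁ σ₂ : K → Matrix (Fin n) (Fin n) ℂ)
    (h₁pos : ∀ k, (σ₁ k).PosSemidef) (h₁tr : ∀ k, (σ₁ k).trace = 1)
    (h₂pos : ∀ k, (σ₂ k).PosSemidef) (h₂tr : ∀ k, (σ₂ k).trace = 1)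
    (σ : Matrix (Fin n × Fin n) (Fin n × Fin n) ℂ)
    (hσ : σ = ∑ k : K, (p k : ℂ) • ((σ₁ k) ⊗ₖ (σ₂ k))) :
    (σ * W).trace.im = 0 ∧ 0 ≤ (σ * W).trace.re ∧ (σ * W).trace.re ≤ 1 :=
  swap_witness_separable_bounds_general n W hW K p hp hpsum σ₁ σ₂ h₁pos h₁tr h₂pos h₂tr σ hσ
end

section
/- Let n ≥ 1 and let W := Σ_{i,j} E_{ij} ⊗ E_{ji} be the swap operator on ℂⁿ ⊗ ℂⁿ. If ρ is a density matrix on ℂⁿ ⊗ ℂⁿ such that the real number Tr(ρ·W) satisfies Tr(ρ·W) < 0 or Tr(ρ·W) > 1, then ρ is entangled, i.e., ρ is not a separable state. -/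
open Matrix Kronecker ComplexOrder

/-- A separable state on `ℂⁿ ⊗ ℂⁿ`: a finite convex combination of Kronecker products
of density matrices on `ℂⁿ`. -/
def IsSeparableState (n : ℕ) (σ : Matrix (Fin n × Fin n) (Fin n × Fin n) ℂ) : Prop :=
  ∃ (m : ℕ) (p : Fin m → ℝ) (σ₁ σ₂ : Fin m → Matrix (Fin n) (Fin n) ℂ),
    (∀ k, 0 ≤ p k) ∧ (∑ k, p k = 1) ∧
    (∀ k, (σ₁ k).PosSemidef) ∧ (∀ k, (σ₁ k).trace = 1) ∧
    (∀ k, (σ₂ k).PosSemidef) ∧ (∀ k, (σ₂ k).trace = 1) ∧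
    σ = ∑ k : Fin m, (p k : ℂ) • ((σ₁ k) ⊗ₖ (σ₂ k))

/-!
On a product state the swap operator measures the overlap: `Tr((A ⊗ B) W) = Tr(A B)`.
For positive semidefinite `A`, `B` every eigenvalue of `A` is at most `Tr A`, so
`0 ≤ A ≤ Tr(A) • 1`, and conjugating by a square root of `B` gives
`0 ≤ Tr(A B) ≤ Tr A · Tr B`; for density matrices `Tr(A B) ∈ [0, 1]`.
Since `ρ ↦ Tr(ρ W)` is linear, it maps the convex hull of the product states,
i.e. the separable states, into `[0, 1]` as well.
-/

namespace Matrix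

section PosSemidef

variable {𝕜 : Type*} [RCLike 𝕜] {m : Type*} [Fintype m] [DecidableEq m]

theorem PosSemidef.posSemidef_trace_smul_one_sub_s4 {A : Matrix m m 𝕜} (hA : A.PosSemidef) :
    (A.trace • (1 : Matrix m m 𝕜) - A).PosSemidef := by
  have hH := hA.isHermitian
  have htr : A.trace = ((∑ i, hH.eigenvalues i : ℝ) : 𝕜) := by
    rw [hH.trace_eq_sum_eigenvalues]
    push_cast
    rfl
  rw [htr, ← Algebra.algebraMap_eq_smul_one, posSemidef_iff_isHermitian_and_spectrum_nonneg]
  refine ⟨(IsSelfAdjoint.algebraMap _ (RCLike.conj_ofReal _)).sub hH, ?_⟩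
  rw [← spectrum.singleton_sub_eq, hH.spectrum_eq_image_range]
  rintro _ ⟨_, rfl, _, ⟨_, ⟨i, rfl⟩, rfl⟩, rfl⟩
  simp only [Set.mem_ofPred_eq, ← RCLike.ofReal_sub, RCLike.ofReal_nonneg, sub_nonneg]
  exact Finset.single_le_sum (fun j _ => hA.eigenvalues_nonneg j) (Finset.mem_univ i)

theorem PosSemidef.trace_mul_mem_Icc {A B : Matrix m m 𝕜} (hA : A.PosSemidef)
    (hB : B.PosSemidef) : (A * B).trace ∈ Set.Icc 0 (A.trace * B.trace) := by
  obtain ⟨C, rfl⟩ : ∃ C : Matrix m m 𝕜, B = Cᴴ * C := by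
    open MatrixOrder in exact CStarAlgebra.nonneg_iff_eq_star_mul_self.mp hB.nonneg
  have hcyc (X : Matrix m m 𝕜) : (X * (Cᴴ * C)).trace = (C * X * Cᴴ).trace := by
    rw [trace_mul_cycle' X Cᴴ C, ← Matrix.mul_assoc]
  refine ⟨hcyc A ▸ (hA.mul_mul_conjTranspose_same C).trace_nonneg, sub_nonneg.mp ?_⟩
  have := (hA.posSemidef_trace_smul_one_sub_s4.mul_mul_conjTranspose_same C).trace_nonneg
  rwa [← hcyc, Matrix.sub_mul, trace_sub, smul_mul, one_mul, trace_smul, smul_eq_mul] at this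

end PosSemidef

def swapOperator (m R : Type*) [Fintype m] [DecidableEq m] [CommSemiring R] :
    Matrix (m × m) (m × m) R :=
  ∑ i, ∑ j, single i j (1 : R) ⊗ₖ single j i (1 : R)

theorem trace_kronecker_mul_swapOperator {R m : Type*} [CommSemiring R] [Fintype m]
    [DecidableEq m] (A B : Matrix m m R) :
    ((A ⊗ₖ B) * swapOperator m R).trace = (A * B).trace := by
  simp only [swapOperator, Finset.mul_sum, trace_sum, ← mul_kronecker_mul, trace_kronecker,
    trace_mul_single]
  rw [Finset.sum_comm]
  simp [trace, mul_apply]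

end Matrix

theorem IsSeparableState.trace_mul_swapOperator_mem_Icc {n : ℕ}
    {ρ : Matrix (Fin n × Fin n) (Fin n × Fin n) ℂ} (hρ : IsSeparableState n ρ) :
    (ρ * swapOperator (Fin n) ℂ).trace ∈ Set.Icc 0 1 := by
  obtain ⟨m, p, σ₁, σ₂, hp, hpsum, h₁, htr₁, h₂, htr₂, rfl⟩ := hρ
  have hterm (k : Fin m) : (σ₁ k * σ₂ k).trace ∈ Set.Icc (0 : ℂ) 1 := by
    simpa [htr₁ k, htr₂ k] using (h₁ k).trace_mul_mem_Icc (h₂ k)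
  have := (convex_Icc (0 : ℂ) 1).sum_mem (fun k _ => hp k) hpsum fun k _ => hterm k
  simpa [Finset.sum_mul, trace_sum, trace_kronecker_mul_swapOperator, Complex.real_smul]
    using this

theorem swap_witness_detects_entanglement_general
    (n : ℕ)
    (W : Matrix (Fin n × Fin n) (Fin n × Fin n) ℂ)
    (hW : W = ∑ i : Fin n, ∑ j : Fin n,
        (Matrix.single i j (1 : ℂ)) ⊗ₖ (Matrix.single j i (1 : ℂ)))
    (ρ : Matrix (Fin n × Fin n) (Fin n × Fin n) ℂ)
    (hviol : (ρ * W).trace.re < 0 ∨ 1 < (ρ * W).trace.re) :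
    ¬ IsSeparableState n ρ := by
  intro hsep
  have hW' : W = swapOperator (Fin n) ℂ := hW
  obtain ⟨h₀, h₁⟩ := hW' ▸ hsep.trace_mul_swapOperator_mem_Icc
  have h₀ : 0 ≤ (ρ * W).trace.re := (Complex.le_def.mp h₀).1
  have h₁ : (ρ * W).trace.re ≤ 1 := (Complex.le_def.mp h₁).1
  rcases hviol with h | h <;> linarith

/-- With `W := Σ_{i,j} E_{ij} ⊗ E_{ji}` the swap operator on `ℂⁿ ⊗ ℂⁿ`,
if a density matrix `ρ` on `ℂⁿ ⊗ ℂⁿ` satisfies `Tr(ρ·W) < 0` or `Tr(ρ·W) > 1`,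
then `ρ` is entangled, i.e. not separable. -/
theorem swap_witness_detects_entanglement
    (n : ℕ) (hn : 1 ≤ n)
    (W : Matrix (Fin n × Fin n) (Fin n × Fin n) ℂ)
    (hW : W = ∑ i : Fin n, ∑ j : Fin n,
        (Matrix.single i j (1 : ℂ)) ⊗ₖ (Matrix.single j i (1 : ℂ)))
    (ρ : Matrix (Fin n × Fin n) (Fin n × Fin n) ℂ)
    (hρpos : ρ.PosSemidef) (hρtr : ρ.trace = 1)
    (hviol : (ρ * W).trace.re < 0 ∨ 1 < (ρ * W).trace.re) :
    ¬ IsSeparableState n ρ :=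
  swap_witness_detects_entanglement_general n W hW ρ hviol
end

section
/- Let n ≥ 1, let Λ be a positive ℂ-linear map on n×n complex matrices (Λ(A) is positive semidefinite whenever A is positive semidefinite), and define the partially transformed witness V := Σ_{i,j} E_{ij} ⊗ Λ(E_{ji}), where E_{ij} are the matrix units and ⊗ is the Kronecker product. Then for every separable state σ on ℂⁿ ⊗ ℂⁿ, the real number Tr(σ·V) satisfies Tr(σ·V) ≥ 0. -/
open Matrix Kronecker ComplexOrder

/-!
For a product state, `Tr((A ⊗ B) V) = Tr(B Λ(A))`, the trace of a product of two positive
semidefinite matrices, which is nonnegative since `Tr(B C*C) = Tr(C B C*)`. A separable state is a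
nonnegative combination of product states, and the trace is linear.
-/

namespace Matrix

variable {m l R : Type*} [Fintype m] [Fintype l] [DecidableEq m]

open scoped MatrixOrder in
theorem PosSemidef.trace_mul_nonneg_s6 {𝕜 : Type*} [RCLike 𝕜] {A B : Matrix l l 𝕜}
    (hA : A.PosSemidef) (hB : B.PosSemidef) : 0 ≤ (A * B).trace := by
  classical
  obtain ⟨C, rfl⟩ := CStarAlgebra.nonneg_iff_eq_star_mul_self.mp hB.nonneg
  rw [star_eq_conjTranspose, ← mul_assoc, trace_mul_comm, ← mul_assoc]
  exact (hA.mul_mul_conjTranspose_same C).trace_nonneg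

/-- The partial transpose, in the first factor, of the Choi matrix `Σᵢⱼ Eᵢⱼ ⊗ Λ(Eᵢⱼ)` of `Λ`. -/
def partiallyTransformedWitness [CommSemiring R] (Λ : Matrix m m R →ₗ[R] Matrix l l R) :
    Matrix (m × l) (m × l) R :=
  ∑ i, ∑ j, single i j (1 : R) ⊗ₖ Λ (single j i 1)

theorem trace_kronecker_mul_partiallyTransformedWitness [CommSemiring R]
    (Λ : Matrix m m R →ₗ[R] Matrix l l R) (A : Matrix m m R) (B : Matrix l l R) :
    ((A ⊗ₖ B) * partiallyTransformedWitness Λ).trace = (B * Λ A).trace := by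
  have hsingle (i j : m) : single i j (A i j) = A i j • single i j 1 := by
    rw [smul_single, smul_eq_mul, mul_one]
  conv_rhs => rw [matrix_eq_sum_single A]
  simp only [partiallyTransformedWitness, Finset.mul_sum, ← mul_kronecker_mul, trace_sum,
    trace_kronecker, trace_mul_single, MulOpposite.op_one, one_smul, map_sum, hsingle,
    _root_.map_smul, Matrix.mul_smul, trace_smul, smul_eq_mul]
  exact Finset.sum_comm

end Matrix

theorem partially_transformed_witness_nonneg_on_separable_general
    (n : ℕ)
    (Λ : Matrix (Fin n) (Fin n) ℂ →ₗ[ℂ] Matrix (Fin n) (Fin n) ℂ)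
    (hΛpos : ∀ A : Matrix (Fin n) (Fin n) ℂ, A.PosSemidef → (Λ A).PosSemidef)
    (V : Matrix (Fin n × Fin n) (Fin n × Fin n) ℂ)
    (hV : V = ∑ i : Fin n, ∑ j : Fin n,
        (Matrix.single i j (1 : ℂ)) ⊗ₖ (Λ (Matrix.single j i (1 : ℂ))))
    (K : Type) [Fintype K]
    (p : K → ℝ) (hp : ∀ k, 0 ≤ p k)
    (σ₁ σ₂ : K → Matrix (Fin n) (Fin n) ℂ)
    (h₁pos : ∀ k, (σ₁ k).PosSemidef)
    (h₂pos : ∀ k, (σ₂ k).PosSemidef)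
    (σ : Matrix (Fin n × Fin n) (Fin n × Fin n) ℂ)
    (hσ : σ = ∑ k : K, (p k : ℂ) • ((σ₁ k) ⊗ₖ (σ₂ k))) :
    (σ * V).trace.im = 0 ∧ 0 ≤ (σ * V).trace.re := by
  replace hV : V = partiallyTransformedWitness Λ := hV
  have hnonneg : 0 ≤ (σ * V).trace := by
    rw [hσ, hV, Finset.sum_mul, trace_sum]
    refine Finset.sum_nonneg fun k _ => ?_
    rw [smul_mul, trace_smul, trace_kronecker_mul_partiallyTransformedWitness, smul_eq_mul]
    exact mul_nonneg (by exact_mod_cast hp k) ((h₂pos k).trace_mul_nonneg_s6 (hΛpos _ (h₁pos k)))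
  obtain ⟨hre, him⟩ := Complex.nonneg_iff.mp hnonneg
  exact ⟨him.symm, hre⟩

/-- If `Λ` is a positive ℂ-linear map on `n×n` complex matrices and
`V := Σ_{i,j} E_{ij} ⊗ Λ(E_{ji})`, then for every separable state `σ` on `ℂⁿ ⊗ ℂⁿ`,
`Tr(σ·V)` is a nonnegative real number. -/
theorem partially_transformed_witness_nonneg_on_separable
    (n : ℕ) (hn : 1 ≤ n)
    (Λ : Matrix (Fin n) (Fin n) ℂ →ₗ[ℂ] Matrix (Fin n) (Fin n) ℂ)
    (hΛpos : ∀ A : Matrix (Fin n) (Fin n) ℂ, A.PosSemidef → (Λ A).PosSemidef)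
    (V : Matrix (Fin n × Fin n) (Fin n × Fin n) ℂ)
    (hV : V = ∑ i : Fin n, ∑ j : Fin n,
        (Matrix.single i j (1 : ℂ)) ⊗ₖ (Λ (Matrix.single j i (1 : ℂ))))
    (K : Type) [Fintype K]
    (p : K → ℝ) (hp : ∀ k, 0 ≤ p k) (hpsum : ∑ k, p k = 1)
    (σ₁ σ₂ : K → Matrix (Fin n) (Fin n) ℂ)
    (h₁pos : ∀ k, (σ₁ k).PosSemidef) (h₁tr : ∀ k, (σ₁ k).trace = 1)
    (h₂pos : ∀ k, (σ₂ k).PosSemidef) (h₂tr : ∀ k, (σ₂ k).trace = 1)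
    (σ : Matrix (Fin n × Fin n) (Fin n × Fin n) ℂ)
    (hσ : σ = ∑ k : K, (p k : ℂ) • ((σ₁ k) ⊗ₖ (σ₂ k))) :
    (σ * V).trace.im = 0 ∧ 0 ≤ (σ * V).trace.re :=
  partially_transformed_witness_nonneg_on_separable_general n Λ hΛpos V hV K p hp σ₁ σ₂ h₁pos h₂pos
    σ hσ
end
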